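/- With the notation above (M₁ = μB⁻¹DBE, M₂ = μEB⁻¹DB, μ⁶ = λ, D = diag(1ₓ, ρ²1_y, ρ1_z) with ρ a primitive cube root of unity, E = diag(1ₐ, −1_b)), the central element satisfies (M₁M₂)³ = λ·1ₙ, i.e., the representation sends (σ₁σ₂)³ to the scalar λ. -/

import Mathlib

/-!
Since `E² = 1`, the two `E`'s cancel in `M₁M₂ = μ²·B⁻¹DBE·EB⁻¹DB`, leaving `μ²·B⁻¹D²B`.
The eigenvalues of `D` are cube roots of unity, so `D³ = 1` and the cube of this conjugate
of `D²` is `μ⁶·B⁻¹D⁶B = λ·1`.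
-/

open Matrix

theorem Matrix.diagonal_pow_eq_one {n R : Type*} [Fintype n] [DecidableEq n] [Semiring R]
    {d : n → R} {k : ℕ} (h : ∀ i, d i ^ k = 1) : diagonal d ^ k = 1 := by
  rw [diagonal_pow, ← diagonal_one]
  exact congrArg diagonal (funext h)

namespace Units

variable {M : Type*} [Monoid M]

theorem conj_mul_mul_conj_of_mul_self_eq_one (u : Mˣ) (d : M) {e : M} (he : e * e = 1) :
    ↑u⁻¹ * d * u * e * (e * (↑u⁻¹ * d * u)) = ↑u⁻¹ * d ^ 2 * u :=
  calc ↑u⁻¹ * d * u * e * (e * (↑u⁻¹ * d * u)) = ↑u⁻¹ * d * (u * (e * e) * ↑u⁻¹) * d * u := by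
        simp only [mul_assoc]
    _ = ↑u⁻¹ * d ^ 2 * u := by
        rw [he, mul_one, mul_inv, mul_one, sq]
        simp only [mul_assoc]

theorem conj_sq_pow_three_eq_one (u : Mˣ) {d : M} (hd : d ^ 3 = 1) :
    (↑u⁻¹ * d ^ 2 * u) ^ 3 = 1 := by
  rw [conj_pow', ← pow_mul, mul_comm, pow_mul, hd, one_pow, mul_one, inv_mul]

end Units

theorem smul_conj_mul_smul_conj_pow_three {R A : Type*} [CommMonoid R] [Monoid A] [MulAction R A]
    [IsScalarTower R A A] [SMulCommClass R A A] (μ : R) (u : Aˣ) {d e : A} (hd : d ^ 3 = 1)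
    (he : e * e = 1) :
    (μ • (↑u⁻¹ * d * u * e) * μ • (e * (↑u⁻¹ * d * u))) ^ 3 = μ ^ 6 • (1 : A) := by
  rw [smul_mul_smul_comm, u.conj_mul_mul_conj_of_mul_self_eq_one d he, smul_pow,
    u.conj_sq_pow_three_eq_one hd, ← sq, ← pow_mul]

theorem stmt3_general (a b x y : ℕ)
    (ρ : ℂ) (hρ : IsPrimitiveRoot ρ 3)
    (lam μ : ℂ) (hμ : μ ^ 6 = lam)
    (B : Matrix (Fin (a + b)) (Fin (a + b)) ℂ) (hB : IsUnit B) :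
    let D : Matrix (Fin (a + b)) (Fin (a + b)) ℂ :=
      Matrix.diagonal fun i => if (i : ℕ) < x then 1 else if (i : ℕ) < x + y then ρ ^ 2 else ρ
    let E : Matrix (Fin (a + b)) (Fin (a + b)) ℂ :=
      Matrix.diagonal fun i => if (i : ℕ) < a then 1 else -1
    let M₁ := μ • (B⁻¹ * D * B * E)
    let M₂ := μ • (E * (B⁻¹ * D * B))
    (M₁ * M₂) ^ 3 = lam • (1 : Matrix (Fin (a + b)) (Fin (a + b)) ℂ) := by
  intro D E M₁ M₂
  have hD : D ^ 3 = 1 := diagonal_pow_eq_one fun i => by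
    split_ifs
    · exact one_pow 3
    · rw [← pow_mul, mul_comm, pow_mul, hρ.pow_eq_one, one_pow]
    · exact hρ.pow_eq_one
  have hE : E * E = 1 := by
    rw [← sq]
    exact diagonal_pow_eq_one fun i => by split_ifs <;> norm_num
  have hB_inv : B⁻¹ = ↑hB.unit⁻¹ := by rw [coe_units_inv, IsUnit.unit_spec]
  rw [← hμ, ← smul_conj_mul_smul_conj_pow_three μ hB.unit hD hE, ← hB_inv, IsUnit.unit_spec]

/-- With `M₁ = μ·B⁻¹DBE`, `M₂ = μ·E·B⁻¹DB`, `μ⁶ = λ`, the central element satisfies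
`(M₁M₂)³ = λ·1ₙ`. -/
theorem stmt3 (a b x y z : ℕ) (hn : a + b = x + y + z)
    (ρ : ℂ) (hρ : IsPrimitiveRoot ρ 3)
    (lam μ : ℂ) (hlam : lam ≠ 0) (hμ : μ ^ 6 = lam)
    (B : Matrix (Fin (a + b)) (Fin (a + b)) ℂ) (hB : IsUnit B) :
    let D : Matrix (Fin (a + b)) (Fin (a + b)) ℂ :=
      Matrix.diagonal fun i => if (i : ℕ) < x then 1 else if (i : ℕ) < x + y then ρ ^ 2 else ρ
    let E : Matrix (Fin (a + b)) (Fin (a + b)) ℂ :=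
      Matrix.diagonal fun i => if (i : ℕ) < a then 1 else -1
    let M₁ := μ • (B⁻¹ * D * B * E)
    let M₂ := μ • (E * (B⁻¹ * D * B))
    (M₁ * M₂) ^ 3 = lam • (1 : Matrix (Fin (a + b)) (Fin (a + b)) ℂ) :=
  stmt3_general a b x y ρ hρ lam μ hμ B hB
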